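/- Correctness of normalization for JLC: for every term Γ ⊢ t : A of JLC there exists a normal form n with Γ ⊢nf n : A such that Γ ⊢ t ≡ n : A in the equational theory of JLC (viewing the normal form as a term via the evident embedding). -/

import Mathlib

/-- Types of JLC: base, unit, products, functions and the modal type ◇. -/
inductive Ty : Type
  | base : Ty
  | unit : Ty
  | prod : Ty → Ty → Ty
  | arr : Ty → Ty → Ty
  | dia : Ty → Ty

/-- Typing contexts (de Bruijn; the head is the most recently bound variable). -/
abbrev Ctx := List Ty

/-- Raw terms of JLC with de Bruijn indices. -/
inductive Tm : Type
  | var : ℕ → Tm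
  | unit : Tm
  | pair : Tm → Tm → Tm
  | fst : Tm → Tm
  | snd : Tm → Tm
  | lam : Tm → Tm
  | app : Tm → Tm → Tm
  | letm : Tm → Tm → Tm           -- letmap x = t in u
  | letj : Tm → Tm → Tm           -- letjoin x = t in u

/-- Lifting of a renaming under a binder. -/
def liftRen (ρ : ℕ → ℕ) : ℕ → ℕ
  | 0 => 0
  | n + 1 => ρ n + 1

/-- Renaming of the variables of a term. -/
def rename (ρ : ℕ → ℕ) : Tm → Tm
  | .var n => .var (ρ n)
  | .unit => .unit
  | .pair t u => .pair (rename ρ t) (rename ρ u)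
  | .fst t => .fst (rename ρ t)
  | .snd t => .snd (rename ρ t)
  | .lam t => .lam (rename (liftRen ρ) t)
  | .app t u => .app (rename ρ t) (rename ρ u)
  | .letm t u => .letm (rename ρ t) (rename (liftRen ρ) u)
  | .letj t u => .letj (rename ρ t) (rename (liftRen ρ) u)

/-- Capture-avoiding substitution of `u` for the variable `k`. -/
def subst (k : ℕ) (u : Tm) : Tm → Tm
  | .var n => if n < k then .var n else if n = k then rename (· + k) u else .var (n - 1)
  | .unit => .unit
  | .pair t t' => .pair (subst k u t) (subst k u t')
  | .fst t => .fst (subst k u t)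
  | .snd t => .snd (subst k u t)
  | .lam t => .lam (subst (k + 1) u t)
  | .app t t' => .app (subst k u t) (subst k u t')
  | .letm t t' => .letm (subst k u t) (subst (k + 1) u t')
  | .letj t t' => .letj (subst k u t) (subst (k + 1) u t')

/-- The typing judgment `Γ ⊢ t : A` of JLC, with the letmap and letjoin rules. -/
inductive HasTy : Ctx → Tm → Ty → Prop
  | var {Γ n A} : Γ[n]? = some A → HasTy Γ (.var n) A
  | unit {Γ} : HasTy Γ .unit .unit
  | pair {Γ t u A B} : HasTy Γ t A → HasTy Γ u B → HasTy Γ (.pair t u) (.prod A B)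
  | fst {Γ t A B} : HasTy Γ t (.prod A B) → HasTy Γ (.fst t) A
  | snd {Γ t A B} : HasTy Γ t (.prod A B) → HasTy Γ (.snd t) B
  | lam {Γ t A B} : HasTy (A :: Γ) t B → HasTy Γ (.lam t) (.arr A B)
  | app {Γ t u A B} : HasTy Γ t (.arr A B) → HasTy Γ u A → HasTy Γ (.app t u) B
  | letm {Γ t u A B} : HasTy Γ t (.dia A) → HasTy (A :: Γ) u B →
      HasTy Γ (.letm t u) (.dia B)
  | letj {Γ t u A B} : HasTy Γ t (.dia A) → HasTy (A :: Γ) u (.dia B) →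
      HasTy Γ (.letj t u) (.dia B)

/-- The equational theory `Γ ⊢ t ≡ u : A` of JLC: the congruence generated by
⊤-η, ×-β, ×-η, →-β, →-η, ◇-η, ◇-β₁, ◇-β₂, ◇-com and ◇-ass. -/
inductive EqTm : Ctx → Tm → Tm → Ty → Prop
  | refl {Γ t A} : HasTy Γ t A → EqTm Γ t t A
  | symm {Γ t u A} : EqTm Γ t u A → EqTm Γ u t A
  | trans {Γ t u v A} : EqTm Γ t u A → EqTm Γ u v A → EqTm Γ t v A
  | pair_congr {Γ t t' u u' A B} : EqTm Γ t t' A → EqTm Γ u u' B →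
      EqTm Γ (.pair t u) (.pair t' u') (.prod A B)
  | fst_congr {Γ t t' A B} : EqTm Γ t t' (.prod A B) → EqTm Γ (.fst t) (.fst t') A
  | snd_congr {Γ t t' A B} : EqTm Γ t t' (.prod A B) → EqTm Γ (.snd t) (.snd t') B
  | lam_congr {Γ t t' A B} : EqTm (A :: Γ) t t' B → EqTm Γ (.lam t) (.lam t') (.arr A B)
  | app_congr {Γ t t' u u' A B} : EqTm Γ t t' (.arr A B) → EqTm Γ u u' A →
      EqTm Γ (.app t u) (.app t' u') B
  | letm_congr {Γ t t' u u' A B} : EqTm Γ t t' (.dia A) → EqTm (A :: Γ) u u' B →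
      EqTm Γ (.letm t u) (.letm t' u') (.dia B)
  | letj_congr {Γ t t' u u' A B} : EqTm Γ t t' (.dia A) → EqTm (A :: Γ) u u' (.dia B) →
      EqTm Γ (.letj t u) (.letj t' u') (.dia B)
  | unit_eta {Γ t} : HasTy Γ t .unit → EqTm Γ t .unit .unit
  | prod_beta1 {Γ t u A B} : HasTy Γ t A → HasTy Γ u B →
      EqTm Γ (.fst (.pair t u)) t A
  | prod_beta2 {Γ t u A B} : HasTy Γ t A → HasTy Γ u B →
      EqTm Γ (.snd (.pair t u)) u B
  | prod_eta {Γ t A B} : HasTy Γ t (.prod A B) →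
      EqTm Γ t (.pair (.fst t) (.snd t)) (.prod A B)
  | arr_beta {Γ t u A B} : HasTy (A :: Γ) t B → HasTy Γ u A →
      EqTm Γ (.app (.lam t) u) (subst 0 u t) B
  | arr_eta {Γ t A B} : HasTy Γ t (.arr A B) →
      EqTm Γ t (.lam (.app (rename Nat.succ t) (.var 0))) (.arr A B)
  | dia_eta {Γ t A} : HasTy Γ t (.dia A) →
      EqTm Γ t (.letm t (.var 0)) (.dia A)
  | dia_beta1 {Γ t u u' A B C} : HasTy Γ t (.dia A) → HasTy (A :: Γ) u B →
      HasTy (B :: Γ) u' C →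
      EqTm Γ (.letm (.letm t u) u')
        (.letm t (subst 0 u (rename (liftRen Nat.succ) u'))) (.dia C)
  | dia_beta2 {Γ t u u' A B C} : HasTy Γ t (.dia A) → HasTy (A :: Γ) u B →
      HasTy (B :: Γ) u' (.dia C) →
      EqTm Γ (.letj (.letm t u) u')
        (.letj t (subst 0 u (rename (liftRen Nat.succ) u'))) (.dia C)
  | dia_com {Γ t u u' A B C} : HasTy Γ t (.dia A) → HasTy (A :: Γ) u (.dia B) →
      HasTy (B :: Γ) u' C →
      EqTm Γ (.letm (.letj t u) u')
        (.letj t (.letm u (rename (liftRen Nat.succ) u'))) (.dia C)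
  | dia_ass {Γ t u u' A B C} : HasTy Γ t (.dia A) → HasTy (A :: Γ) u (.dia B) →
      HasTy (B :: Γ) u' (.dia C) →
      EqTm Γ (.letj (.letj t u) u')
        (.letj t (.letj u (rename (liftRen Nat.succ) u'))) (.dia C)

mutual
  /-- Neutral terms `Γ ⊢ne n : A` of JLC. -/
  inductive Neu : Ctx → Tm → Ty → Prop
    | var {Γ n A} : Γ[n]? = some A → Neu Γ (.var n) A
    | fst {Γ t A B} : Neu Γ t (.prod A B) → Neu Γ (.fst t) A
    | snd {Γ t A B} : Neu Γ t (.prod A B) → Neu Γ (.snd t) B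
    | app {Γ t u A B} : Neu Γ t (.arr A B) → Nf Γ u A → Neu Γ (.app t u) B

  /-- Normal forms `Γ ⊢nf n : A` of JLC. -/
  inductive Nf : Ctx → Tm → Ty → Prop
    | up {Γ t} : Neu Γ t .base → Nf Γ t .base
    | unit {Γ} : Nf Γ .unit .unit
    | pair {Γ t u A B} : Nf Γ t A → Nf Γ u B → Nf Γ (.pair t u) (.prod A B)
    | lam {Γ t A B} : Nf (A :: Γ) t B → Nf Γ (.lam t) (.arr A B)
    | letm {Γ t u A B} : Neu Γ t (.dia A) → Nf (A :: Γ) u B →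
        Nf Γ (.letm t u) (.dia B)
    | letj {Γ t u A B} : Neu Γ t (.dia A) → Nf (A :: Γ) u (.dia B) →
        Nf Γ (.letj t u) (.dia B)
end

/-!
Normalization by a Kripke logical predicate glued to the syntax. `Sem A Γ t` says that `t` is well typed
and behaves like a value of type `A` in every context `Γ` renames into; at `◇A` it says that `t` is
convertible to a `Cover`: a chain of `letjoin`s on neutrals ending in a `letmap` on a neutral whose body
satisfies `Sem A`. Reflection of neutrals into `Sem` and reification of `Sem` into normal forms go by
simultaneous induction on types, through the η-laws. The fundamental lemma, that substituting semantic
terms into a well-typed term yields a semantic term, goes by induction on typing: at the modal rules,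
◇-β₁ and ◇-β₂ push a `letmap`/`letjoin` into the final `letmap` of a cover and ◇-com, ◇-ass move it
past each `letjoin`. Since variables are neutral, the identity substitution is semantic, so every
well-typed term reifies to a normal form.
-/

def liftSub (σ : ℕ → Tm) : ℕ → Tm
  | 0 => .var 0
  | n + 1 => rename Nat.succ (σ n)

def ssubst (σ : ℕ → Tm) : Tm → Tm
  | .var n => σ n
  | .unit => .unit
  | .pair t u => .pair (ssubst σ t) (ssubst σ u)
  | .fst t => .fst (ssubst σ t)
  | .snd t => .snd (ssubst σ t)
  | .lam t => .lam (ssubst (liftSub σ) t)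
  | .app t u => .app (ssubst σ t) (ssubst σ u)
  | .letm t u => .letm (ssubst σ t) (ssubst (liftSub σ) u)
  | .letj t u => .letj (ssubst σ t) (ssubst (liftSub σ) u)

def scons (u : Tm) (σ : ℕ → Tm) : ℕ → Tm
  | 0 => u
  | n + 1 => σ n

theorem liftRen_comp (ρ ρ' : ℕ → ℕ) : liftRen (ρ ∘ ρ') = liftRen ρ ∘ liftRen ρ' := by
  funext n; cases n <;> rfl

theorem liftRen_id : liftRen id = id := by
  funext n; cases n <;> rfl

theorem liftRen_comp_succ (ρ : ℕ → ℕ) : liftRen ρ ∘ Nat.succ = Nat.succ ∘ ρ := rfl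

theorem rename_rename (ρ ρ' : ℕ → ℕ) (t : Tm) :
    rename ρ (rename ρ' t) = rename (ρ ∘ ρ') t := by
  induction t generalizing ρ ρ' <;> simp [rename, liftRen_comp, *]

theorem rename_id (t : Tm) : rename id t = t := by
  induction t <;> simp [rename, liftRen_id, *]

theorem rename_liftRen_rename_succ (ρ : ℕ → ℕ) (t : Tm) :
    rename (liftRen ρ) (rename Nat.succ t) = rename Nat.succ (rename ρ t) := by
  rw [rename_rename, rename_rename, liftRen_comp_succ]

theorem liftSub_var (ρ : ℕ → ℕ) : liftSub (Tm.var ∘ ρ) = Tm.var ∘ liftRen ρ := by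
  funext n; cases n <;> rfl

theorem rename_eq_ssubst (ρ : ℕ → ℕ) (t : Tm) : rename ρ t = ssubst (Tm.var ∘ ρ) t := by
  induction t generalizing ρ <;> simp [rename, ssubst, liftSub_var, *]

theorem ssubst_var (t : Tm) : ssubst Tm.var t = t := by
  simpa using (rename_eq_ssubst id t).symm.trans (rename_id t)

theorem liftSub_comp_liftRen (σ : ℕ → Tm) (ρ : ℕ → ℕ) :
    liftSub σ ∘ liftRen ρ = liftSub (σ ∘ ρ) := by
  funext n; cases n <;> rfl

theorem ssubst_rename (σ : ℕ → Tm) (ρ : ℕ → ℕ) (t : Tm) :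
    ssubst σ (rename ρ t) = ssubst (σ ∘ ρ) t := by
  induction t generalizing σ ρ <;> simp [rename, ssubst, liftSub_comp_liftRen, *]

theorem rename_comp_liftSub (ρ : ℕ → ℕ) (σ : ℕ → Tm) :
    rename (liftRen ρ) ∘ liftSub σ = liftSub (rename ρ ∘ σ) := by
  funext n
  cases n with
  | zero => rfl
  | succ n => exact rename_liftRen_rename_succ ρ (σ n)

theorem rename_ssubst (ρ : ℕ → ℕ) (σ : ℕ → Tm) (t : Tm) :
    rename ρ (ssubst σ t) = ssubst (rename ρ ∘ σ) t := by
  induction t generalizing σ ρ <;> simp [rename, ssubst, ← rename_comp_liftSub, *]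

theorem ssubst_comp_liftSub (σ τ : ℕ → Tm) :
    ssubst (liftSub σ) ∘ liftSub τ = liftSub (ssubst σ ∘ τ) := by
  funext n
  cases n with
  | zero => rfl
  | succ n =>
      show ssubst (liftSub σ) (rename Nat.succ (τ n)) = rename Nat.succ (ssubst σ (τ n))
      rw [ssubst_rename, rename_ssubst]; rfl

theorem ssubst_ssubst (σ τ : ℕ → Tm) (t : Tm) :
    ssubst σ (ssubst τ t) = ssubst (ssubst σ ∘ τ) t := by
  induction t generalizing σ τ <;> simp [ssubst, ← ssubst_comp_liftSub, *]

def substAt (k : ℕ) (u : Tm) (n : ℕ) : Tm :=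
  if n < k then .var n else if n = k then rename (· + k) u else .var (n - 1)

theorem liftSub_substAt (k : ℕ) (u : Tm) : liftSub (substAt k u) = substAt (k + 1) u := by
  funext n
  cases n with
  | zero => simp [liftSub, substAt]
  | succ n =>
      simp only [liftSub, substAt]
      by_cases hlt : n < k
      · simp [hlt, rename]
      by_cases heq : n = k
      · subst heq
        simp [rename_rename, Function.comp_def, Nat.add_assoc]
      · have : n - 1 + 1 = n := by omega
        simp [rename, hlt, heq, this]

theorem subst_eq_ssubst (k : ℕ) (u t : Tm) : subst k u t = ssubst (substAt k u) t := by
  induction t generalizing k <;> simp [subst, ssubst, liftSub_substAt, substAt, *]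

theorem subst_zero_eq_ssubst (u t : Tm) : subst 0 u t = ssubst (scons u Tm.var) t := by
  rw [subst_eq_ssubst]
  congr 1
  funext n
  cases n with
  | zero => exact rename_id u
  | succ n => simp [substAt, scons]

theorem ssubst_scons_comp_liftSub (v : Tm) (σ : ℕ → Tm) :
    ssubst (scons v Tm.var) ∘ liftSub σ = scons v σ := by
  funext n
  cases n with
  | zero => rfl
  | succ n => exact (ssubst_rename _ _ (σ n)).trans (ssubst_var (σ n))

theorem subst_zero_rename_ssubst_liftSub (v : Tm) (ρ : ℕ → ℕ) (σ : ℕ → Tm) (t : Tm) :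
    subst 0 v (rename (liftRen ρ) (ssubst (liftSub σ) t)) = ssubst (scons v (rename ρ ∘ σ)) t := by
  rw [rename_ssubst, rename_comp_liftSub, subst_zero_eq_ssubst, ssubst_ssubst,
    ssubst_scons_comp_liftSub]


def IsRen (Δ : Ctx) (ρ : ℕ → ℕ) (Γ : Ctx) : Prop :=
  ∀ n A, Γ[n]? = some A → Δ[ρ n]? = some A

theorem IsRen.lift {Δ ρ Γ} (h : IsRen Δ ρ Γ) (A : Ty) :
    IsRen (A :: Δ) (liftRen ρ) (A :: Γ) := by
  rintro (_ | n) B hn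
  · exact hn
  · exact h n B hn

theorem IsRen.succ (A : Ty) (Γ : Ctx) : IsRen (A :: Γ) Nat.succ Γ := fun _ _ h => h

theorem IsRen.id (Γ : Ctx) : IsRen Γ id Γ := fun _ _ h => h

theorem IsRen.comp {E ρ' Δ ρ Γ} (h' : IsRen E ρ' Δ) (h : IsRen Δ ρ Γ) : IsRen E (ρ' ∘ ρ) Γ :=
  fun n A hn => h' _ A (h n A hn)

theorem HasTy.rename {Γ t A} (h : HasTy Γ t A) :
    ∀ {Δ ρ}, IsRen Δ ρ Γ → HasTy Δ (rename ρ t) A := by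
  induction h with
  | var h => exact fun hr => .var (hr _ _ h)
  | unit => exact fun _ => .unit
  | pair _ _ ih₁ ih₂ => exact fun hr => .pair (ih₁ hr) (ih₂ hr)
  | fst _ ih => exact fun hr => .fst (ih hr)
  | snd _ ih => exact fun hr => .snd (ih hr)
  | lam _ ih => exact fun hr => .lam (ih (hr.lift _))
  | app _ _ ih₁ ih₂ => exact fun hr => .app (ih₁ hr) (ih₂ hr)
  | letm _ _ ih₁ ih₂ => exact fun hr => .letm (ih₁ hr) (ih₂ (hr.lift _))
  | letj _ _ ih₁ ih₂ => exact fun hr => .letj (ih₁ hr) (ih₂ (hr.lift _))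

def IsSub (Δ : Ctx) (σ : ℕ → Tm) (Γ : Ctx) : Prop :=
  ∀ n A, Γ[n]? = some A → HasTy Δ (σ n) A

theorem IsSub.lift {Δ σ Γ} (h : IsSub Δ σ Γ) (A : Ty) :
    IsSub (A :: Δ) (liftSub σ) (A :: Γ) := by
  rintro (_ | n) B hn
  · exact .var hn
  · exact (h n B hn).rename (IsRen.succ A Δ)

theorem HasTy.ssubst {Γ t A} (h : HasTy Γ t A) :
    ∀ {Δ σ}, IsSub Δ σ Γ → HasTy Δ (ssubst σ t) A := by
  induction h with
  | var h => exact fun hs => hs _ _ h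
  | unit => exact fun _ => .unit
  | pair _ _ ih₁ ih₂ => exact fun hs => .pair (ih₁ hs) (ih₂ hs)
  | fst _ ih => exact fun hs => .fst (ih hs)
  | snd _ ih => exact fun hs => .snd (ih hs)
  | lam _ ih => exact fun hs => .lam (ih (hs.lift _))
  | app _ _ ih₁ ih₂ => exact fun hs => .app (ih₁ hs) (ih₂ hs)
  | letm _ _ ih₁ ih₂ => exact fun hs => .letm (ih₁ hs) (ih₂ (hs.lift _))
  | letj _ _ ih₁ ih₂ => exact fun hs => .letj (ih₁ hs) (ih₂ (hs.lift _))

theorem HasTy.subst_zero {Γ t u A B} (ht : HasTy (A :: Γ) t B) (hu : HasTy Γ u A) :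
    HasTy Γ (subst 0 u t) B := by
  rw [subst_zero_eq_ssubst]
  refine ht.ssubst ?_
  rintro (_ | n) C hn
  · obtain rfl : A = C := by simpa using hn
    exact hu
  · exact .var hn

mutual
theorem Neu.rename : ∀ {Γ t A}, Neu Γ t A → ∀ {Δ ρ}, IsRen Δ ρ Γ → Neu Δ (rename ρ t) A
  | _, _, _, .var h, _, _, hr => .var (hr _ _ h)
  | _, _, _, .fst h, _, _, hr => .fst (h.rename hr)
  | _, _, _, .snd h, _, _, hr => .snd (h.rename hr)
  | _, _, _, .app h hu, _, _, hr => .app (h.rename hr) (hu.rename hr)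

theorem Nf.rename : ∀ {Γ t A}, Nf Γ t A → ∀ {Δ ρ}, IsRen Δ ρ Γ → Nf Δ (rename ρ t) A
  | _, _, _, .up h, _, _, hr => .up (h.rename hr)
  | _, _, _, .unit, _, _, _ => .unit
  | _, _, _, .pair h₁ h₂, _, _, hr => .pair (h₁.rename hr) (h₂.rename hr)
  | _, _, _, .lam h, _, _, hr => .lam (h.rename (hr.lift _))
  | _, _, _, .letm h₁ h₂, _, _, hr => .letm (h₁.rename hr) (h₂.rename (hr.lift _))
  | _, _, _, .letj h₁ h₂, _, _, hr => .letj (h₁.rename hr) (h₂.rename (hr.lift _))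
end

mutual
theorem Neu.hasTy : ∀ {Γ t A}, Neu Γ t A → HasTy Γ t A
  | _, _, _, .var h => .var h
  | _, _, _, .fst h => .fst h.hasTy
  | _, _, _, .snd h => .snd h.hasTy
  | _, _, _, .app h hu => .app h.hasTy hu.hasTy

theorem Nf.hasTy : ∀ {Γ t A}, Nf Γ t A → HasTy Γ t A
  | _, _, _, .up h => h.hasTy
  | _, _, _, .unit => .unit
  | _, _, _, .pair h₁ h₂ => .pair h₁.hasTy h₂.hasTy
  | _, _, _, .lam h => .lam h.hasTy
  | _, _, _, .letm h₁ h₂ => .letm h₁.hasTy h₂.hasTy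
  | _, _, _, .letj h₁ h₂ => .letj h₁.hasTy h₂.hasTy
end

theorem rename_subst_zero (ρ : ℕ → ℕ) (u t : Tm) :
    rename ρ (subst 0 u t) = subst 0 (rename ρ u) (rename (liftRen ρ) t) := by
  simp only [subst_zero_eq_ssubst, rename_ssubst, ssubst_rename]
  congr 1
  funext n
  cases n <;> rfl

theorem rename_liftRen_rename_liftRen_succ (ρ : ℕ → ℕ) (t : Tm) :
    rename (liftRen (liftRen ρ)) (rename (liftRen Nat.succ) t) =
      rename (liftRen Nat.succ) (rename (liftRen ρ) t) := by
  simp only [rename_rename, ← liftRen_comp, liftRen_comp_succ]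

theorem EqTm.rename {Γ t u A} (h : EqTm Γ t u A) :
    ∀ {Δ ρ}, IsRen Δ ρ Γ → EqTm Δ (rename ρ t) (rename ρ u) A := by
  induction h with
  | refl h => exact fun hr => .refl (h.rename hr)
  | symm _ ih => exact fun hr => (ih hr).symm
  | trans _ _ ih₁ ih₂ => exact fun hr => (ih₁ hr).trans (ih₂ hr)
  | pair_congr _ _ ih₁ ih₂ => exact fun hr => .pair_congr (ih₁ hr) (ih₂ hr)
  | fst_congr _ ih => exact fun hr => .fst_congr (ih hr)
  | snd_congr _ ih => exact fun hr => .snd_congr (ih hr)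
  | lam_congr _ ih => exact fun hr => .lam_congr (ih (hr.lift _))
  | app_congr _ _ ih₁ ih₂ => exact fun hr => .app_congr (ih₁ hr) (ih₂ hr)
  | letm_congr _ _ ih₁ ih₂ => exact fun hr => .letm_congr (ih₁ hr) (ih₂ (hr.lift _))
  | letj_congr _ _ ih₁ ih₂ => exact fun hr => .letj_congr (ih₁ hr) (ih₂ (hr.lift _))
  | unit_eta h => exact fun hr => .unit_eta (h.rename hr)
  | prod_beta1 ht hu => exact fun hr => .prod_beta1 (ht.rename hr) (hu.rename hr)
  | prod_beta2 ht hu => exact fun hr => .prod_beta2 (ht.rename hr) (hu.rename hr)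
  | prod_eta h => exact fun hr => .prod_eta (h.rename hr)
  | arr_beta ht hu =>
      intro Δ ρ hr
      rw [rename_subst_zero]
      exact .arr_beta (ht.rename (hr.lift _)) (hu.rename hr)
  | arr_eta h =>
      intro Δ ρ hr
      simp only [_root_.rename, liftRen, rename_liftRen_rename_succ]
      exact .arr_eta (h.rename hr)
  | dia_eta h => exact fun hr => .dia_eta (h.rename hr)
  | dia_beta1 ht hu hu' =>
      intro Δ ρ hr
      simp only [_root_.rename, rename_subst_zero, rename_liftRen_rename_liftRen_succ]
      exact .dia_beta1 (ht.rename hr) (hu.rename (hr.lift _)) (hu'.rename (hr.lift _))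
  | dia_beta2 ht hu hu' =>
      intro Δ ρ hr
      simp only [_root_.rename, rename_subst_zero, rename_liftRen_rename_liftRen_succ]
      exact .dia_beta2 (ht.rename hr) (hu.rename (hr.lift _)) (hu'.rename (hr.lift _))
  | dia_com ht hu hu' =>
      intro Δ ρ hr
      simp only [_root_.rename, rename_liftRen_rename_liftRen_succ]
      exact .dia_com (ht.rename hr) (hu.rename (hr.lift _)) (hu'.rename (hr.lift _))
  | dia_ass ht hu hu' =>
      intro Δ ρ hr
      simp only [_root_.rename, rename_liftRen_rename_liftRen_succ]
      exact .dia_ass (ht.rename hr) (hu.rename (hr.lift _)) (hu'.rename (hr.lift _))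

theorem EqTm.hasTy {Γ t u A} (h : EqTm Γ t u A) : HasTy Γ t A ∧ HasTy Γ u A := by
  have hweak {Γ u' A B C} (hu' : HasTy (B :: Γ) u' C) :
      HasTy (B :: A :: Γ) (_root_.rename (liftRen Nat.succ) u') C :=
    hu'.rename ((IsRen.succ A Γ).lift B)
  induction h with
  | refl h => exact ⟨h, h⟩
  | symm _ ih => exact ih.symm
  | trans _ _ ih₁ ih₂ => exact ⟨ih₁.1, ih₂.2⟩
  | pair_congr _ _ ih₁ ih₂ => exact ⟨.pair ih₁.1 ih₂.1, .pair ih₁.2 ih₂.2⟩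
  | fst_congr _ ih => exact ⟨.fst ih.1, .fst ih.2⟩
  | snd_congr _ ih => exact ⟨.snd ih.1, .snd ih.2⟩
  | lam_congr _ ih => exact ⟨.lam ih.1, .lam ih.2⟩
  | app_congr _ _ ih₁ ih₂ => exact ⟨.app ih₁.1 ih₂.1, .app ih₁.2 ih₂.2⟩
  | letm_congr _ _ ih₁ ih₂ => exact ⟨.letm ih₁.1 ih₂.1, .letm ih₁.2 ih₂.2⟩
  | letj_congr _ _ ih₁ ih₂ => exact ⟨.letj ih₁.1 ih₂.1, .letj ih₁.2 ih₂.2⟩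
  | unit_eta h => exact ⟨h, .unit⟩
  | prod_beta1 ht hu => exact ⟨.fst (.pair ht hu), ht⟩
  | prod_beta2 ht hu => exact ⟨.snd (.pair ht hu), hu⟩
  | prod_eta h => exact ⟨h, .pair (.fst h) (.snd h)⟩
  | arr_beta ht hu => exact ⟨.app (.lam ht) hu, ht.subst_zero hu⟩
  | arr_eta h => exact ⟨h, .lam (.app (h.rename (IsRen.succ _ _)) (.var rfl))⟩
  | dia_eta h => exact ⟨h, .letm h (.var rfl)⟩
  | dia_beta1 ht hu hu' =>
      exact ⟨.letm (.letm ht hu) hu', .letm ht ((hweak hu').subst_zero hu)⟩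
  | dia_beta2 ht hu hu' =>
      exact ⟨.letj (.letm ht hu) hu', .letj ht ((hweak hu').subst_zero hu)⟩
  | dia_com ht hu hu' => exact ⟨.letm (.letj ht hu) hu', .letj ht (.letm hu (hweak hu'))⟩
  | dia_ass ht hu hu' => exact ⟨.letj (.letj ht hu) hu', .letj ht (.letj hu (hweak hu'))⟩

inductive Cover (P : Ctx → Tm → Prop) : Ctx → Tm → Prop
  | letm {Γ n u B} : Neu Γ n (.dia B) → P (B :: Γ) u → Cover P Γ (.letm n u)
  | letj {Γ n u B} : Neu Γ n (.dia B) → Cover P (B :: Γ) u → Cover P Γ (.letj n u)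

def Sem : Ty → Ctx → Tm → Prop
  | .base, Γ, t => ∃ n, Nf Γ n .base ∧ EqTm Γ t n .base
  | .unit, Γ, t => HasTy Γ t .unit
  | .prod A B, Γ, t => HasTy Γ t (.prod A B) ∧ Sem A Γ (.fst t) ∧ Sem B Γ (.snd t)
  | .arr A B, Γ, t => HasTy Γ t (.arr A B) ∧
      ∀ Δ ρ, IsRen Δ ρ Γ → ∀ u, Sem A Δ u → Sem B Δ (.app (rename ρ t) u)
  | .dia A, Γ, t => ∃ s, Cover (Sem A) Γ s ∧ EqTm Γ t s (.dia A)

theorem Cover.hasTy {P A} (hP : ∀ {Γ t}, P Γ t → HasTy Γ t A) {Γ s} (h : Cover P Γ s) :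
    HasTy Γ s (.dia A) := by
  induction h with
  | letm hn hu => exact .letm hn.hasTy (hP hu)
  | letj hn _ ih => exact .letj hn.hasTy ih

theorem Cover.rename {P} (hP : ∀ {Γ t Δ ρ}, P Γ t → IsRen Δ ρ Γ → P Δ (rename ρ t)) {Γ s}
    (h : Cover P Γ s) : ∀ {Δ ρ}, IsRen Δ ρ Γ → Cover P Δ (rename ρ s) := by
  induction h with
  | letm hn hu => exact fun hr => .letm (hn.rename hr) (hP hu (hr.lift _))
  | letj hn _ ih => exact fun hr => .letj (hn.rename hr) (ih (hr.lift _))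

theorem Cover.reify {P A} (hP : ∀ {Γ t}, P Γ t → ∃ m, Nf Γ m A ∧ EqTm Γ t m A) {Γ s}
    (h : Cover P Γ s) : ∃ m, Nf Γ m (.dia A) ∧ EqTm Γ s m (.dia A) := by
  induction h with
  | letm hn hu =>
      obtain ⟨m, hm, e⟩ := hP hu
      exact ⟨_, .letm hn hm, .letm_congr (.refl hn.hasTy) e⟩
  | letj hn _ ih =>
      obtain ⟨m, hm, e⟩ := ih
      exact ⟨_, .letj hn hm, .letj_congr (.refl hn.hasTy) e⟩

theorem Sem.hasTy : ∀ {A Γ t}, Sem A Γ t → HasTy Γ t A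
  | .base, _, _, ⟨_, _, e⟩ => e.hasTy.1
  | .unit, _, _, h => h
  | .prod _ _, _, _, h => h.1
  | .arr _ _, _, _, h => h.1
  | .dia _, _, _, ⟨_, _, e⟩ => e.hasTy.1

theorem Sem.conv {A Γ t t'} (h : Sem A Γ t) (e : EqTm Γ t t' A) : Sem A Γ t' := by
  induction A generalizing Γ t t' with
  | base =>
      obtain ⟨n, hn, e'⟩ := h
      exact ⟨n, hn, e.symm.trans e'⟩
  | unit => exact e.hasTy.2
  | prod A B ihA ihB => exact ⟨e.hasTy.2, ihA h.2.1 (.fst_congr e), ihB h.2.2 (.snd_congr e)⟩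
  | arr A B ihA ihB =>
      refine ⟨e.hasTy.2, fun Δ ρ hr u hu => ?_⟩
      exact ihB (h.2 Δ ρ hr u hu) (.app_congr (e.rename hr) (.refl hu.hasTy))
  | dia A ihA =>
      obtain ⟨s, hs, e'⟩ := h
      exact ⟨s, hs, e.symm.trans e'⟩

theorem Sem.rename {A Γ t} (h : Sem A Γ t) {Δ ρ} (hr : IsRen Δ ρ Γ) :
    Sem A Δ (rename ρ t) := by
  induction A generalizing Γ t Δ ρ with
  | base =>
      obtain ⟨n, hn, e⟩ := h
      exact ⟨_, hn.rename hr, e.rename hr⟩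
  | unit => exact HasTy.rename h hr
  | prod A B ihA ihB => exact ⟨h.1.rename hr, ihA h.2.1 hr, ihB h.2.2 hr⟩
  | arr A B ihA ihB =>
      refine ⟨h.1.rename hr, fun E ρ' hr' u hu => ?_⟩
      rw [rename_rename]
      exact h.2 E _ (hr'.comp hr) u hu
  | dia A ihA =>
      obtain ⟨s, hs, e⟩ := h
      exact ⟨_, hs.rename (fun h hr => ihA h hr) hr, e.rename hr⟩

theorem reflect_and_reify (A : Ty) :
    (∀ {Γ n}, Neu Γ n A → Sem A Γ n) ∧
      ∀ {Γ t}, Sem A Γ t → ∃ m, Nf Γ m A ∧ EqTm Γ t m A := by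
  induction A with
  | base => exact ⟨fun h => ⟨_, .up h, .refl h.hasTy⟩, id⟩
  | unit => exact ⟨Neu.hasTy, fun h => ⟨_, .unit, .unit_eta h⟩⟩
  | prod A B ihA ihB =>
      refine ⟨fun h => ⟨h.hasTy, ihA.1 (.fst h), ihB.1 (.snd h)⟩, fun ⟨ht, h₁, h₂⟩ => ?_⟩
      obtain ⟨m₁, hm₁, e₁⟩ := ihA.2 h₁
      obtain ⟨m₂, hm₂, e₂⟩ := ihB.2 h₂
      exact ⟨_, .pair hm₁ hm₂, (EqTm.prod_eta ht).trans (.pair_congr e₁ e₂)⟩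
  | arr A B ihA ihB =>
      constructor
      · intro Γ n h
        refine ⟨h.hasTy, fun Δ ρ hr u hu => ?_⟩
        obtain ⟨m, hm, e⟩ := ihA.2 hu
        exact (ihB.1 (.app (h.rename hr) hm)).conv
          (.app_congr (.refl (h.hasTy.rename hr)) e.symm)
      · rintro Γ t ⟨ht, hf⟩
        obtain ⟨m, hm, e⟩ := ihB.2 (hf _ _ (IsRen.succ A Γ) (.var 0) (ihA.1 (.var rfl)))
        exact ⟨_, .lam hm, (EqTm.arr_eta ht).trans (.lam_congr e)⟩
  | dia A ihA =>
      refine ⟨fun h => ⟨_, .letm h (ihA.1 (.var rfl)), .dia_eta h.hasTy⟩, ?_⟩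
      rintro Γ t ⟨s, hs, e⟩
      obtain ⟨m, hm, e'⟩ := hs.reify ihA.2
      exact ⟨m, hm, e.trans e'⟩

theorem Neu.sem {A Γ n} (h : Neu Γ n A) : Sem A Γ n := (reflect_and_reify A).1 h

theorem Sem.reify {A Γ t} (h : Sem A Γ t) : ∃ m, Nf Γ m A ∧ EqTm Γ t m A :=
  (reflect_and_reify A).2 h

theorem Sem.pair {A B Γ t u} (ht : Sem A Γ t) (hu : Sem B Γ u) :
    Sem (.prod A B) Γ (.pair t u) :=
  ⟨.pair ht.hasTy hu.hasTy, ht.conv (.symm (.prod_beta1 ht.hasTy hu.hasTy)),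
    hu.conv (.symm (.prod_beta2 ht.hasTy hu.hasTy))⟩

theorem Sem.app {A B Γ t u} (ht : Sem (.arr A B) Γ t) (hu : Sem A Γ u) :
    Sem B Γ (.app t u) := by
  simpa only [rename_id] using ht.2 Γ id (IsRen.id Γ) u hu

def SemSub (Δ : Ctx) (σ : ℕ → Tm) (Γ : Ctx) : Prop :=
  ∀ n A, Γ[n]? = some A → Sem A Δ (σ n)

theorem SemSub.id (Γ : Ctx) : SemSub Γ Tm.var Γ := fun _ _ h => (Neu.var h).sem

theorem SemSub.rename {Δ σ Γ E ρ} (h : SemSub Δ σ Γ) (hr : IsRen E ρ Δ) :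
    SemSub E (rename ρ ∘ σ) Γ :=
  fun n A hn => (h n A hn).rename hr

theorem SemSub.cons {Δ σ Γ A u} (hu : Sem A Δ u) (h : SemSub Δ σ Γ) :
    SemSub Δ (scons u σ) (A :: Γ) := by
  rintro (_ | n) B hn
  · obtain rfl : A = B := by simpa using hn
    exact hu
  · exact h n B hn

theorem SemSub.lift {Δ σ Γ} (h : SemSub Δ σ Γ) (A : Ty) :
    SemSub (A :: Δ) (liftSub σ) (A :: Γ) := by
  rintro (_ | n) B hn
  · exact ((h.rename (IsRen.succ A Δ)).cons (Neu.var rfl).sem) 0 B hn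
  · exact (h n B hn).rename (IsRen.succ A Δ)

def Valid (Γ : Ctx) (t : Tm) (A : Ty) : Prop :=
  ∀ ⦃Δ σ⦄, SemSub Δ σ Γ → Sem A Δ (ssubst σ t)

theorem Valid.lam {Γ t A B} (ht : Valid (A :: Γ) t B) : Valid Γ (.lam t) (.arr A B) := by
  intro Δ σ hσ
  have hbody : HasTy (A :: Δ) (ssubst (liftSub σ) t) B := (ht (hσ.lift A)).hasTy
  refine ⟨.lam hbody, fun E ρ hr v hv => ?_⟩
  have hβ := EqTm.arr_beta (hbody.rename (hr.lift A)) hv.hasTy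
  rw [subst_zero_rename_ssubst_liftSub] at hβ
  exact (ht ((hσ.rename hr).cons hv)).conv hβ.symm

theorem Cover.map {Γ A B u} (hu : Valid (A :: Γ) u B) {Δ s} (hs : Cover (Sem A) Δ s) {σ}
    (hσ : SemSub Δ σ Γ) : Sem (.dia B) Δ (.letm s (ssubst (liftSub σ) u)) := by
  induction hs generalizing σ with
  | @letm Δ n v C hn hv =>
      refine ⟨_, .letm hn (hu ((hσ.rename (IsRen.succ C Δ)).cons hv)), ?_⟩
      have hβ := EqTm.dia_beta1 hn.hasTy hv.hasTy (hu (hσ.lift A)).hasTy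
      rwa [subst_zero_rename_ssubst_liftSub] at hβ
  | @letj Δ n c C hn hc ih =>
      obtain ⟨c', hc', e⟩ := ih (hσ.rename (IsRen.succ C Δ))
      refine ⟨_, .letj hn hc', ?_⟩
      have hcom := EqTm.dia_com hn.hasTy (hc.hasTy Sem.hasTy) (hu (hσ.lift A)).hasTy
      rw [rename_ssubst, rename_comp_liftSub] at hcom
      exact hcom.trans (.letj_congr (.refl hn.hasTy) e)

theorem Cover.bind {Γ A B u} (hu : Valid (A :: Γ) u (.dia B)) {Δ s} (hs : Cover (Sem A) Δ s)
    {σ} (hσ : SemSub Δ σ Γ) : Sem (.dia B) Δ (.letj s (ssubst (liftSub σ) u)) := by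
  induction hs generalizing σ with
  | @letm Δ n v C hn hv =>
      obtain ⟨c, hc, e⟩ := hu ((hσ.rename (IsRen.succ C Δ)).cons hv)
      refine ⟨_, .letj hn hc, ?_⟩
      have hβ := EqTm.dia_beta2 hn.hasTy hv.hasTy (hu (hσ.lift A)).hasTy
      rw [subst_zero_rename_ssubst_liftSub] at hβ
      exact hβ.trans (.letj_congr (.refl hn.hasTy) e)
  | @letj Δ n c C hn hc ih =>
      obtain ⟨c', hc', e⟩ := ih (hσ.rename (IsRen.succ C Δ))
      refine ⟨_, .letj hn hc', ?_⟩
      have hass := EqTm.dia_ass hn.hasTy (hc.hasTy Sem.hasTy) (hu (hσ.lift A)).hasTy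
      rw [rename_ssubst, rename_comp_liftSub] at hass
      exact hass.trans (.letj_congr (.refl hn.hasTy) e)

theorem Valid.letm {Γ t u A B} (ht : Valid Γ t (.dia A)) (hu : Valid (A :: Γ) u B) :
    Valid Γ (.letm t u) (.dia B) := by
  intro Δ σ hσ
  obtain ⟨s, hs, e⟩ := ht hσ
  exact (hs.map hu hσ).conv (.letm_congr e.symm (.refl (hu (hσ.lift A)).hasTy))

theorem Valid.letj {Γ t u A B} (ht : Valid Γ t (.dia A)) (hu : Valid (A :: Γ) u (.dia B)) :
    Valid Γ (.letj t u) (.dia B) := by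
  intro Δ σ hσ
  obtain ⟨s, hs, e⟩ := ht hσ
  exact (hs.bind hu hσ).conv (.letj_congr e.symm (.refl (hu (hσ.lift A)).hasTy))

theorem HasTy.valid {Γ t A} (h : HasTy Γ t A) : Valid Γ t A := by
  induction h with
  | var h => exact fun _ _ hσ => hσ _ _ h
  | unit => exact fun _ _ _ => HasTy.unit
  | pair _ _ ih₁ ih₂ => exact fun _ _ hσ => (ih₁ hσ).pair (ih₂ hσ)
  | fst _ ih => exact fun _ _ hσ => (ih hσ).2.1
  | snd _ ih => exact fun _ _ hσ => (ih hσ).2.2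
  | lam _ ih => exact ih.lam
  | app _ _ ih₁ ih₂ => exact fun _ _ hσ => (ih₁ hσ).app (ih₂ hσ)
  | letm _ _ ih₁ ih₂ => exact ih₁.letm ih₂
  | letj _ _ ih₁ ih₂ => exact ih₁.letj ih₂

/-- STATEMENT 13: correctness of normalization for JLC: every well-typed term
`Γ ⊢ t : A` has a normal form `Γ ⊢nf n : A` with `Γ ⊢ t ≡ n : A`. -/
theorem normalization_correct_JLC {Γ : Ctx} {t : Tm} {A : Ty}
    (ht : HasTy Γ t A) : ∃ n : Tm, Nf Γ n A ∧ EqTm Γ t n A := by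
  simpa only [ssubst_var] using (ht.valid (SemSub.id Γ)).reify
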